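/- Lower Ricci curvature bound for edges: for every edge (x,y) ∈ E of a simple, strongly connected, finite weighted directed graph, κ(x,y) ≥ −2d(y,x)·(1 − 𝒫(x,y) − 𝒫(y,x))₊ + (1 + d(y,x) − ℋ(y,x)), where (·)₊ denotes the positive part and ℋ(y,x) = −(ℋ_y + ←ℋ_x) is the mixed asymptotic mean curvature. -/
import Mathlib


open Finset Filter Topology MeasureTheory
open scoped Classical

noncomputable section

variable {V : Type*}

/-- Vertex weight `μ(x) = Σ_y μ_{xy}`. -/
def vdeg [Fintype V] (μ : V → V → ℝ) (x : V) : ℝ := ∑ y, μ x y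

/-- Transition probability kernel `P(x,y) = μ_{xy}/μ(x)`. -/
def transP [Fintype V] (μ : V → V → ℝ) (x y : V) : ℝ := μ x y / vdeg μ x

/-- `m` is the Perron measure of `(V,μ)`. -/
def IsPerron [Fintype V] (μ : V → V → ℝ) (m : V → ℝ) : Prop :=
  (∀ x, 0 < m x) ∧ (∑ x, m x = 1) ∧ ∀ x, m x = ∑ y, m y * transP μ y x

/-- Mean transition probability kernel `𝒫 = (P + ←P)/2`. -/
def meanK [Fintype V] (μ : V → V → ℝ) (m : V → ℝ) (x y : V) : ℝ :=
  (transP μ x y + m y / m x * transP μ y x) / 2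

/-- There is a directed path of length `n` from `x` to `y`. -/
def HasPathLen (μ : V → V → ℝ) (x y : V) (n : ℕ) : Prop :=
  ∃ c : ℕ → V, c 0 = x ∧ c n = y ∧ ∀ i < n, 0 < μ (c i) (c (i + 1))

/-- The (non-symmetric) graph distance. -/
def gdist (μ : V → V → ℝ) (x y : V) : ℝ :=
  sInf {r : ℝ | ∃ n : ℕ, (r : ℝ) = (n : ℝ) ∧ HasPathLen μ x y n}

/-- The graph is simple: no loops. -/
def IsSimpleW (μ : V → V → ℝ) : Prop := ∀ x, μ x x = 0

/-- The edge weight is nonnegative. -/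
def Nonneg (μ : V → V → ℝ) : Prop := ∀ x y, 0 ≤ μ x y

/-- The graph is strongly connected. -/
def StronglyConnectedW (μ : V → V → ℝ) : Prop := ∀ x y, ∃ n, HasPathLen μ x y n

/-- `π` is a coupling of the probability measures `ν₀, ν₁`. -/
def IsCoupling [Fintype V] (π : V → V → ℝ) (ν₀ ν₁ : V → ℝ) : Prop :=
  (∀ x y, 0 ≤ π x y) ∧ (∀ x, ∑ y, π x y = ν₀ x) ∧ (∀ y, ∑ x, π x y = ν₁ y)

/-- The L¹-Wasserstein distance with cost `d`. -/
def Wass [Fintype V] (d : V → V → ℝ) (ν₀ ν₁ : V → ℝ) : ℝ :=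
  sInf {c : ℝ | ∃ π, IsCoupling π ν₀ ν₁ ∧ c = ∑ x, ∑ y, d x y * π x y}

/-- The probability measure `ν^ε_x`. -/
def nu [Fintype V] (P : V → V → ℝ) (ε : ℝ) (x z : V) : ℝ :=
  if z = x then 1 - ε else ε * P x z

/-- `κ_ε(x,y) = 1 − W(ν^ε_x, ν^ε_y)/d(x,y)`. -/
def kappaEps [Fintype V] (μ : V → V → ℝ) (m : V → ℝ) (ε : ℝ) (x y : V) : ℝ :=
  1 - Wass (gdist μ) (nu (meanK μ m) ε x) (nu (meanK μ m) ε y) / gdist μ x y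

/-- The (positive) Chung Laplacian associated with a kernel `P`. -/
def chungL [Fintype V] (P : V → V → ℝ) (f : V → ℝ) (x : V) : ℝ :=
  f x - ∑ y, P x y * f y

/-- The negative Laplacian `Δ = −ℒ`. -/
def negL [Fintype V] (P : V → V → ℝ) (f : V → ℝ) (x : V) : ℝ :=
  (∑ y, P x y * f y) - f x

/-- `f` is 1-Lipschitz with respect to the non-symmetric distance `d`. -/
def Lip1 (d : V → V → ℝ) (f : V → ℝ) : Prop := ∀ x y, f y - f x ≤ d x y

/-- The asymptotic mean curvature `ℋ_x = ℒρ_x(x)`. -/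
def Hout [Fintype V] (μ : V → V → ℝ) (m : V → ℝ) (x : V) : ℝ :=
  chungL (meanK μ m) (fun y => gdist μ x y) x

/-- The reverse asymptotic mean curvature `←ℋ_x = ℒ←ρ_x(x)`. -/
def Hin [Fintype V] (μ : V → V → ℝ) (m : V → ℝ) (x : V) : ℝ :=
  chungL (meanK μ m) (fun y => gdist μ y x) x

/-- The mixed asymptotic mean curvature `ℋ(x,y) = −(ℋ_x + ←ℋ_y)`. -/
def Hmix [Fintype V] (μ : V → V → ℝ) (m : V → ℝ) (x y : V) : ℝ :=
  -(Hout μ m x + Hin μ m y)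

/-- The neighborhood `𝒩_x = N_x ∪ ←N_x`. -/
def nbr [Fintype V] (μ : V → V → ℝ) (x : V) : Finset V :=
  Finset.univ.filter (fun y => 0 < μ x y ∨ 0 < μ y x)

section AuxLemmas

/-- The distance set has a least element given connectivity. -/
lemma gdist_min (μ : V → V → ℝ) {a b : V} (h : ∃ n, HasPathLen μ a b n) :
    ∃ n : ℕ, gdist μ a b = n ∧ HasPathLen μ a b n ∧ ∀ m, HasPathLen μ a b m → n ≤ m := by
  classical
  have hS : {n : ℕ | HasPathLen μ a b n}.Nonempty := h
  refine ⟨sInf {n : ℕ | HasPathLen μ a b n}, ?_, Nat.sInf_mem hS, fun m hm => Nat.sInf_le hm⟩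
  apply IsLeast.csInf_eq
  constructor
  · exact ⟨_, rfl, Nat.sInf_mem hS⟩
  · rintro r ⟨n, rfl, hn⟩
    exact_mod_cast Nat.sInf_le hn

lemma hasPathLen_zero (μ : V → V → ℝ) (a : V) : HasPathLen μ a a 0 :=
  ⟨fun _ => a, rfl, rfl, fun i hi => absurd hi (Nat.not_lt_zero i)⟩

lemma hasPathLen_one {μ : V → V → ℝ} {a b : V} (h : 0 < μ a b) : HasPathLen μ a b 1 := by
  refine ⟨fun i => if i = 0 then a else b, by simp, by simp, ?_⟩
  intro i hi
  interval_cases i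
  simpa using h

lemma gdist_self (μ : V → V → ℝ) (a : V) : gdist μ a a = 0 := by
  obtain ⟨n, hn, _, hmin⟩ := gdist_min μ ⟨0, hasPathLen_zero μ a⟩
  have h0 := hmin 0 (hasPathLen_zero μ a)
  have : n = 0 := Nat.le_zero.mp h0
  rw [hn, this, Nat.cast_zero]

lemma gdist_nonneg' (μ : V → V → ℝ) {a b : V} (h : ∃ n, HasPathLen μ a b n) :
    0 ≤ gdist μ a b := by
  obtain ⟨n, hn, _, _⟩ := gdist_min μ h
  rw [hn]; positivity

lemma hasPathLen_pos {μ : V → V → ℝ} {a b : V} (hab : a ≠ b) {n : ℕ}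
    (h : HasPathLen μ a b n) : 1 ≤ n := by
  rcases Nat.eq_zero_or_pos n with h0 | h1
  · obtain ⟨c, hc0, hcn, _⟩ := h
    subst h0
    exact absurd (hc0 ▸ hcn) hab
  · exact h1

lemma gdist_edge {μ : V → V → ℝ} {a b : V} (hab : a ≠ b) (h : 0 < μ a b) :
    gdist μ a b = 1 := by
  obtain ⟨n, hn, hp, hmin⟩ := gdist_min μ ⟨1, hasPathLen_one h⟩
  have h1 := hmin 1 (hasPathLen_one h)
  have h2 := hasPathLen_pos hab hp
  have : n = 1 := le_antisymm h1 h2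
  rw [hn, this, Nat.cast_one]

lemma gdist_ge_one {μ : V → V → ℝ} {a b : V} (hab : a ≠ b)
    (h : ∃ n, HasPathLen μ a b n) : 1 ≤ gdist μ a b := by
  obtain ⟨n, hn, hp, _⟩ := gdist_min μ h
  have := hasPathLen_pos hab hp
  rw [hn]; exact_mod_cast this

lemma gdist_le_of_path {μ : V → V → ℝ} {a b : V} {n : ℕ} (h : HasPathLen μ a b n) :
    gdist μ a b ≤ n := by
  apply csInf_le
  · refine ⟨0, ?_⟩
    rintro r ⟨m, rfl, _⟩
    positivity
  · exact ⟨n, rfl, h⟩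

/-- Prepend an edge to a path. -/
lemma gdist_prepend {μ : V → V → ℝ} {a b : V} (h : 0 < μ a b)
    (hconn : StronglyConnectedW μ) (v : V) :
    gdist μ a v ≤ 1 + gdist μ b v := by
  obtain ⟨n, hn, ⟨c, hc0, hcn, hstep⟩, _⟩ := gdist_min μ (hconn b v)
  have hpath : HasPathLen μ a v (n + 1) := by
    refine ⟨fun i => if i = 0 then a else c (i - 1), by simp, by simp [hcn], ?_⟩
    intro i hi
    rcases Nat.eq_zero_or_pos i with rfl | hip
    · simpa [hc0] using h
    · have h1 : i ≠ 0 := hip.ne'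
      have h2 : i + 1 ≠ 0 := by omega
      simp only [h1, h2, if_false]
      have : i + 1 - 1 = (i - 1) + 1 := by omega
      rw [this]
      exact hstep (i - 1) (by omega)
  calc gdist μ a v ≤ ((n + 1 : ℕ) : ℝ) := gdist_le_of_path hpath
    _ = 1 + gdist μ b v := by rw [hn]; push_cast; ring

/-- Append an edge to a path. -/
lemma gdist_append {μ : V → V → ℝ} {a b : V} (h : 0 < μ a b)
    (hconn : StronglyConnectedW μ) (v : V) :
    gdist μ v b ≤ gdist μ v a + 1 := by
  obtain ⟨n, hn, ⟨c, hc0, hcn, hstep⟩, _⟩ := gdist_min μ (hconn v a)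
  have hpath : HasPathLen μ v b (n + 1) := by
    refine ⟨fun i => if i = n + 1 then b else c i, by simp [hc0], by simp, ?_⟩
    intro i hi
    rcases Nat.lt_or_ge i n with hin | hin
    · have h1 : i ≠ n + 1 := by omega
      have h2 : i + 1 ≠ n + 1 := by omega
      simp only [h1, h2, if_false]
      exact hstep i hin
    · have : i = n := by omega
      subst this
      have h1 : i ≠ i + 1 := by omega
      simp only [h1, if_false, if_pos rfl]
      rw [hcn]
      exact h
  calc gdist μ v b ≤ ((n + 1 : ℕ) : ℝ) := gdist_le_of_path hpath
    _ = gdist μ v a + 1 := by rw [hn]; push_cast; ring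

lemma vdeg_nonneg [Fintype V] {μ : V → V → ℝ} (hnn : Nonneg μ) (u : V) :
    0 ≤ vdeg μ u :=
  Finset.sum_nonneg fun v _ => hnn u v

lemma vdeg_pos [Fintype V] {μ : V → V → ℝ} (hnn : Nonneg μ)
    (hconn : StronglyConnectedW μ) {x y : V} (hxy : x ≠ y) (u : V) :
    0 < vdeg μ u := by
  set t : V := if u = x then y else x with ht
  have hut : u ≠ t := by
    rcases eq_or_ne u x with rfl | h
    · simpa [ht] using hxy
    · simpa [ht, h] using h
  obtain ⟨n, c, hc0, hcn, hstep⟩ := hconn u t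
  have hn : 1 ≤ n := hasPathLen_pos hut ⟨c, hc0, hcn, hstep⟩
  have h1 : 0 < μ u (c 1) := hc0 ▸ hstep 0 hn
  calc (0:ℝ) < μ u (c 1) := h1
    _ ≤ vdeg μ u := Finset.single_le_sum (fun v _ => hnn u v) (Finset.mem_univ _)

lemma transP_nonneg [Fintype V] {μ : V → V → ℝ} (hnn : Nonneg μ) (u v : V) :
    0 ≤ transP μ u v :=
  div_nonneg (hnn u v) (vdeg_nonneg hnn u)

lemma sum_transP [Fintype V] {μ : V → V → ℝ} (hv : 0 < vdeg μ u) :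
    ∑ v, transP μ u v = 1 := by
  unfold transP
  rw [← Finset.sum_div]
  exact div_self hv.ne'

lemma meanK_nonneg [Fintype V] {μ : V → V → ℝ} {m : V → ℝ} (hnn : Nonneg μ)
    (hm : IsPerron μ m) (u v : V) : 0 ≤ meanK μ m u v := by
  unfold meanK
  have h1 := transP_nonneg hnn u v
  have h2 := transP_nonneg hnn v u
  have h3 : 0 ≤ m v / m u := div_nonneg (hm.1 v).le (hm.1 u).le
  positivity

lemma meanK_self [Fintype V] {μ : V → V → ℝ} {m : V → ℝ} (hsimple : IsSimpleW μ)
    (u : V) : meanK μ m u u = 0 := by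
  unfold meanK transP
  rw [hsimple u]
  simp

lemma sum_meanK [Fintype V] {μ : V → V → ℝ} {m : V → ℝ} (hnn : Nonneg μ)
    (hconn : StronglyConnectedW μ) {x y : V} (hxy : x ≠ y)
    (hm : IsPerron μ m) (u : V) : ∑ v, meanK μ m u v = 1 := by
  unfold meanK
  rw [← Finset.sum_div, Finset.sum_add_distrib]
  have h1 : ∑ v, transP μ u v = 1 := sum_transP (vdeg_pos hnn hconn hxy u)
  have h2 : ∑ v, m v / m u * transP μ v u = 1 := by
    have : ∑ v, m v / m u * transP μ v u = (∑ v, m v * transP μ v u) / m u := by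
      rw [Finset.sum_div]
      congr 1
      ext v
      ring
    rw [this, ← hm.2.2 u]
    exact div_self (hm.1 u).ne'
  rw [h1, h2]
  norm_num

end AuxLemmas

/-- lower Ricci curvature bound for edges. -/
theorem ricci_lower_bound_edge
    {V : Type*} [Fintype V] (μ : V → V → ℝ) (m : V → ℝ)
    (hnn : Nonneg μ) (hsimple : IsSimpleW μ) (hconn : StronglyConnectedW μ)
    (hm : IsPerron μ m) (x y : V) (hedge : 0 < μ x y) (k : ℝ)
    (hk : Tendsto (fun ε => kappaEps μ m ε x y / ε) (𝓝[>] (0:ℝ)) (𝓝 k)) :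
    -2 * gdist μ y x * max (1 - meanK μ m x y - meanK μ m y x) 0
      + (1 + gdist μ y x - Hmix μ m y x) ≤ k := by
  classical
  have hxy : x ≠ y := by
    intro h
    rw [h] at hedge
    exact absurd hedge (by rw [hsimple y]; exact lt_irrefl 0)
  set K : V → V → ℝ := meanK μ m with hK
  set d : V → V → ℝ := gdist μ with hd
  have hKnn : ∀ u v, 0 ≤ K u v := meanK_nonneg hnn hm
  have hKsum : ∀ u, ∑ v, K u v = 1 := sum_meanK hnn hconn hxy hm
  have hKxx : K x x = 0 := meanK_self hsimple x
  have hKyy : K y y = 0 := meanK_self hsimple y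
  have hdnn : ∀ u v, 0 ≤ d u v := fun u v => gdist_nonneg' μ (hconn u v)
  have hdxx : d x x = 0 := gdist_self μ x
  have hdyy : d y y = 0 := gdist_self μ y
  have hdxy : d x y = 1 := gdist_edge hxy hedge
  set p : ℝ := K x y with hp
  set q : ℝ := K y x with hq
  set D : ℝ := d y x with hD
  have hD1 : 1 ≤ D := gdist_ge_one hxy.symm (hconn y x)
  set H1 : ℝ := ∑ v, K y v * d y v with hH1
  set H2 : ℝ := ∑ v, K x v * d v x with hH2
  have hHmix : Hmix μ m y x = H1 + H2 := by
    unfold Hmix Hout Hin chungL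
    simp only [← hK, ← hd, hdyy, hdxx]
    ring
  have split : ∀ g : V → ℝ, ∑ v, g v = ∑ v ∈ Finset.univ \ {x, y}, g v + (g x + g y) := by
    intro g
    rw [← Finset.sum_sdiff (Finset.subset_univ {x, y}), Finset.sum_pair hxy]
  have hmem : ∀ v ∈ Finset.univ \ ({x, y} : Finset V), v ≠ x ∧ v ≠ y := by
    intro v hv
    simp only [Finset.mem_sdiff, Finset.mem_univ, Finset.mem_insert,
      Finset.mem_singleton, true_and] at hv
    exact ⟨fun h => hv (Or.inl h), fun h => hv (Or.inr h)⟩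
  -- the key estimate for each small ε
  have key : ∀ ε : ℝ, ε ∈ Set.Ioo (0:ℝ) (1/2) →
      (p + q) * (1 + D) - (H1 + H2) ≤ kappaEps μ m ε x y / ε := by
    intro ε hε
    obtain ⟨hε0, hε2⟩ := hε
    have hε2' : 1 - 2 * ε ≥ 0 := by linarith
    -- the explicit coupling
    set π : V → V → ℝ := fun u v =>
      if u = x then (if v = x then ε * q else if v = y then 1 - 2 * ε else ε * K y v)
      else (if v = y then (if u = y then ε * p else ε * K x u) else 0) with hπ
    have hπnn : ∀ u v, 0 ≤ π u v := by
      intro u v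
      simp only [hπ]
      split_ifs <;> first
        | positivity
        | linarith
        | exact mul_nonneg hε0.le (hKnn _ _)
    have hyx : y ≠ x := Ne.symm hxy
    have hsumKy : ∑ v ∈ Finset.univ \ ({x, y} : Finset V), K y v = 1 - q := by
      have h := split (K y)
      rw [hKsum y, hKyy, ← hq] at h
      linarith
    have hsumKx : ∑ v ∈ Finset.univ \ ({x, y} : Finset V), K x v = 1 - p := by
      have h := split (K x)
      rw [hKsum x, hKxx, ← hp] at h
      linarith
    have hxy' : ¬ (x = y) := hxy
    have hyx' : ¬ (y = x) := hyx
    have hrow : ∀ u, ∑ v, π u v = nu K ε x u := by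
      intro u
      by_cases hu : u = x
      · rw [hu, split]
        have hsd : ∑ v ∈ Finset.univ \ ({x, y} : Finset V), π x v
            = ∑ v ∈ Finset.univ \ ({x, y} : Finset V), ε * K y v := by
          refine Finset.sum_congr rfl fun v hv => ?_
          obtain ⟨hvx, hvy⟩ := hmem v hv
          simp [hπ, hvx, hvy]
        rw [hsd, ← Finset.mul_sum, hsumKy]
        have h1 : π x x = ε * q := by simp [hπ]
        have h2 : π x y = 1 - 2 * ε := by simp [hπ, hyx']
        rw [h1, h2]
        simp only [nu, if_pos rfl, if_true, eq_self_iff_true]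
        ring
      · by_cases hu' : u = y
        · rw [hu', split]
          have hsd : ∑ v ∈ Finset.univ \ ({x, y} : Finset V), π y v
              = ∑ v ∈ Finset.univ \ ({x, y} : Finset V), 0 := by
            refine Finset.sum_congr rfl fun v hv => ?_
            obtain ⟨hvx, hvy⟩ := hmem v hv
            simp [hπ, hvy, hyx']
          rw [hsd]
          have h1 : π y x = 0 := by simp [hπ, hyx', hxy']
          have h2 : π y y = ε * p := by simp [hπ, hyx']
          rw [h1, h2]
          simp only [nu, if_neg hyx']
          simp [hp]
        · rw [split]
          have hsd : ∑ v ∈ Finset.univ \ ({x, y} : Finset V), π u v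
              = ∑ v ∈ Finset.univ \ ({x, y} : Finset V), 0 := by
            refine Finset.sum_congr rfl fun v hv => ?_
            obtain ⟨hvx, hvy⟩ := hmem v hv
            simp [hπ, hu, hvy]
          rw [hsd]
          have h1 : π u x = 0 := by simp [hπ, hu, hxy']
          have h2 : π u y = ε * K x u := by simp [hπ, hu, hu']
          rw [h1, h2]
          simp only [nu, if_neg hu]
          simp
    have hcol : ∀ v, ∑ u, π u v = nu K ε y v := by
      intro v
      by_cases hv : v = x
      · rw [hv, split]
        have hsd : ∑ u ∈ Finset.univ \ ({x, y} : Finset V), π u x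
            = ∑ u ∈ Finset.univ \ ({x, y} : Finset V), 0 := by
          refine Finset.sum_congr rfl fun u hu => ?_
          obtain ⟨hux, huy⟩ := hmem u hu
          simp [hπ, hux, hxy']
        rw [hsd]
        have h1 : π x x = ε * q := by simp [hπ]
        have h2 : π y x = 0 := by simp [hπ, hyx', hxy']
        rw [h1, h2]
        simp only [nu, if_neg hxy']
        simp [hq]
      · by_cases hv' : v = y
        · rw [hv', split]
          have hsd : ∑ u ∈ Finset.univ \ ({x, y} : Finset V), π u y
              = ∑ u ∈ Finset.univ \ ({x, y} : Finset V), ε * K x u := by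
            refine Finset.sum_congr rfl fun u hu => ?_
            obtain ⟨hux, huy⟩ := hmem u hu
            simp [hπ, hux, huy]
          rw [hsd, ← Finset.mul_sum, hsumKx]
          have h1 : π x y = 1 - 2 * ε := by simp [hπ, hyx']
          have h2 : π y y = ε * p := by simp [hπ, hyx']
          rw [h1, h2]
          simp only [nu, if_pos rfl, if_true, eq_self_iff_true]
          ring
        · rw [split]
          have hsd : ∑ u ∈ Finset.univ \ ({x, y} : Finset V), π u v
              = ∑ u ∈ Finset.univ \ ({x, y} : Finset V), 0 := by
            refine Finset.sum_congr rfl fun u hu => ?_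
            obtain ⟨hux, huy⟩ := hmem u hu
            simp [hπ, hux, hv']
          rw [hsd]
          have h1 : π x v = ε * K y v := by simp [hπ, hv, hv']
          have h2 : π y v = 0 := by simp [hπ, hyx', hv']
          rw [h1, h2]
          simp only [nu, if_neg hv']
          simp
    have hcost : ∑ u, ∑ v, d u v * π u v ≤ 1 - ε * ((p + q) * (1 + D) - (H1 + H2)) := by
      have hH1s : ∑ v ∈ Finset.univ \ ({x, y} : Finset V), K y v * d y v = H1 - q * D := by
        have h := split (fun v => K y v * d y v)
        rw [hKyy, hdyy, ← hq, ← hD, ← hH1] at h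
        linarith
      have hH2s : ∑ v ∈ Finset.univ \ ({x, y} : Finset V), K x v * d v x = H2 - p * D := by
        have h := split (fun v => K x v * d v x)
        rw [hKxx, hdxx, ← hp, ← hD, ← hH2] at h
        linarith
      rw [split]
      -- the row at y contributes nothing
      have hgy : (∑ v, d y v * π y v) = 0 := by
        have h : ∀ v, d y v * π y v = if v = y then d y y * (ε * p) else 0 := by
          intro v
          by_cases hvy : v = y
          · rw [hvy]
            simp [hπ, hyx']
          · by_cases hvx : v = x
            · rw [hvx]
              simp [hπ, hyx', hxy', hvy]
            · simp [hπ, hyx', hvy]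
        rw [Finset.sum_congr rfl fun v _ => h v]
        simp [hdyy]
      -- the row at x
      have hgx : (∑ v, d x v * π x v)
          ≤ ε * ((1 - q) + (H1 - q * D)) + (1 - 2 * ε) := by
        rw [split]
        have hsd : ∑ v ∈ Finset.univ \ ({x, y} : Finset V), d x v * π x v
            ≤ ∑ v ∈ Finset.univ \ ({x, y} : Finset V), (1 + d y v) * (ε * K y v) := by
          refine Finset.sum_le_sum fun v hv => ?_
          obtain ⟨hvx, hvy⟩ := hmem v hv
          have hπv : π x v = ε * K y v := by simp [hπ, hvx, hvy]
          rw [hπv]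
          refine mul_le_mul_of_nonneg_right ?_ (mul_nonneg hε0.le (hKnn _ _))
          exact gdist_prepend hedge hconn v
        have hsd2 : ∑ v ∈ Finset.univ \ ({x, y} : Finset V), (1 + d y v) * (ε * K y v)
            = ε * ((∑ v ∈ Finset.univ \ ({x, y} : Finset V), K y v)
              + ∑ v ∈ Finset.univ \ ({x, y} : Finset V), K y v * d y v) := by
          rw [mul_add, Finset.mul_sum, Finset.mul_sum, ← Finset.sum_add_distrib]
          exact Finset.sum_congr rfl fun v _ => by ring
        have h1 : π x x = ε * q := by simp [hπ]
        have h2 : π x y = 1 - 2 * ε := by simp [hπ, hyx']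
        rw [h1, h2, hdxx, hdxy]
        have := hsd.trans (le_of_eq hsd2)
        rw [hsumKy, hH1s] at this
        linarith
      -- the rows away from x and y
      have hA : (∑ u ∈ Finset.univ \ ({x, y} : Finset V), ∑ v, d u v * π u v)
          ≤ ε * ((H2 - p * D) + (1 - p)) := by
        have hrw : ∀ u ∈ Finset.univ \ ({x, y} : Finset V),
            (∑ v, d u v * π u v) = d u y * (ε * K x u) := by
          intro u hu
          obtain ⟨hux, huy⟩ := hmem u hu
          have h : ∀ v, d u v * π u v = if v = y then d u y * (ε * K x u) else 0 := by
            intro v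
            by_cases hvy : v = y
            · rw [hvy]
              simp [hπ, hux, huy]
            · simp [hπ, hux, hvy]
          rw [Finset.sum_congr rfl fun v _ => h v]
          simp
        rw [Finset.sum_congr rfl hrw]
        have hb : ∑ u ∈ Finset.univ \ ({x, y} : Finset V), d u y * (ε * K x u)
            ≤ ∑ u ∈ Finset.univ \ ({x, y} : Finset V), (d u x + 1) * (ε * K x u) := by
          refine Finset.sum_le_sum fun u hu => ?_
          refine mul_le_mul_of_nonneg_right ?_ (mul_nonneg hε0.le (hKnn _ _))
          exact gdist_append hedge hconn u
        have hb2 : ∑ u ∈ Finset.univ \ ({x, y} : Finset V), (d u x + 1) * (ε * K x u)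
            = ε * ((∑ u ∈ Finset.univ \ ({x, y} : Finset V), K x u * d u x)
              + ∑ u ∈ Finset.univ \ ({x, y} : Finset V), K x u) := by
          rw [mul_add, Finset.mul_sum, Finset.mul_sum, ← Finset.sum_add_distrib]
          exact Finset.sum_congr rfl fun u _ => by ring
        have := hb.trans (le_of_eq hb2)
        rw [hH2s, hsumKx] at this
        linarith
      have hfin : ε * ((H2 - p * D) + (1 - p))
          + (ε * ((1 - q) + (H1 - q * D)) + (1 - 2 * ε)) + 0
          = 1 - ε * ((p + q) * (1 + D) - (H1 + H2)) := by ring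
      linarith
    have hW : Wass d (nu K ε x) (nu K ε y) ≤ 1 - ε * ((p + q) * (1 + D) - (H1 + H2)) := by
      refine le_trans (csInf_le ?_ ⟨π, ⟨hπnn, hrow, hcol⟩, rfl⟩) hcost
      refine ⟨0, ?_⟩
      rintro c ⟨π', hπ', rfl⟩
      exact Finset.sum_nonneg fun u _ => Finset.sum_nonneg fun v _ =>
        mul_nonneg (hdnn u v) (hπ'.1 u v)
    have hκ : kappaEps μ m ε x y = 1 - Wass d (nu K ε x) (nu K ε y) := by
      unfold kappaEps
      rw [← hK, ← hd, hdxy]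
      ring
    rw [le_div_iff₀ hε0, hκ]
    nlinarith [hW]
  have hB' : (p + q) * (1 + D) - (H1 + H2) ≤ k := by
    refine ge_of_tendsto hk ?_
    have hIoo : Set.Ioo (0:ℝ) (1/2) ∈ 𝓝[>] (0:ℝ) :=
      Ioo_mem_nhdsGT_of_mem (by norm_num : (0:ℝ) ∈ Set.Ico (0:ℝ) (1/2))
    filter_upwards [hIoo] with ε hε
    exact key ε hε
  rw [hHmix]
  have hpq : 0 ≤ p + q := add_nonneg (hKnn x y) (hKnn y x)
  rcases le_or_gt (1 - p - q) 0 with hcase | hcase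
  · rw [max_eq_right hcase]
    nlinarith
  · rw [max_eq_left hcase.le]
    nlinarith
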